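/- arXiv:2006.07564 — 2 statements merged into one kernel-verified Lean document; each statement's English description precedes it below -/
import Mathlib

section
/- Let g be convex and f be μ_f-strongly convex, both differentiable on ℝ^n, and let λ_{k-1} > λ_k > 0. Then the minimizers x*_{λ_k} and x*_{λ_{k-1}} of g + λ_k f and g + λ_{k-1} f respectively satisfy ‖x*_{λ_k} - x*_{λ_{k-1}}‖ ≤ (2/μ_f)(1 - λ_k/λ_{k-1}) ‖∇f(x*_{λ_k})‖. -/
/-!
For `λ > 0` the function `g + λ f` is `λ μ_f`-strongly convex, so it grows quadratically away
from its minimizer. Writing this growth at `x*_{λ_k}` (evaluated at `x*_{λ_{k-1}}`) and at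
`x*_{λ_{k-1}}` (evaluated at `x*_{λ_k}`) and adding, the `g`-terms cancel and
`(λ_k + λ_{k-1}) μ_f / 2 ‖x*_{λ_k} - x*_{λ_{k-1}}‖² ≤ (λ_{k-1} - λ_k) (f x*_{λ_k} - f x*_{λ_{k-1}})`.
The first-order condition for the convex `f` and Cauchy–Schwarz bound the last factor by
`‖∇f(x*_{λ_k})‖ ‖x*_{λ_k} - x*_{λ_{k-1}}‖`; dividing and using `λ_k + λ_{k-1} ≥ λ_{k-1}` finishes.
-/

open Set InnerProductSpace

section StrongConvexity

variable {E : Type*} [NormedAddCommGroup E] [NormedSpace ℝ E] {s : Set E} {m : ℝ} {f g : E → ℝ}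

lemma StrongConvexOn.smul (hf : StrongConvexOn s m f) {c : ℝ} (hc : 0 ≤ c) :
    StrongConvexOn s (c * m) (c • f) := by
  refine ⟨hf.1, fun x hx y hy a b ha hb hab ↦ ?_⟩
  have := mul_le_mul_of_nonneg_left (hf.2 hx hy ha hb hab) hc
  simp only [Pi.smul_apply, smul_eq_mul] at this ⊢
  linarith

lemma ConvexOn.add_strongConvexOn (hg : ConvexOn ℝ s g) (hf : StrongConvexOn s m f) :
    StrongConvexOn s m (g + f) := by
  simpa using! hg.uniformConvexOn_zero.add hf

lemma StrongConvexOn.add_sq_norm_sub_le_of_isMinOn {x y : E} (hf : StrongConvexOn s m f)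
    (hmin : IsMinOn f s x) (hx : x ∈ s) (hy : y ∈ s) :
    f x + m / 2 * ‖y - x‖ ^ 2 ≤ f y := by
  set c := m / 2 * ‖y - x‖ ^ 2
  -- Comparing `f x` with `f` at `(1 - b) • y + b • x` gives `b * c ≤ f y - f x`; let `b → 1`.
  have hseg : Ioo 0 1 ⊆ {b : ℝ | b * c ≤ f y - f x} := by
    rintro b ⟨hb0, hb1⟩
    have hcomb := hf.2 hy hx (sub_nonneg.2 hb1.le) hb0.le (sub_add_cancel 1 b)
    have hle : f x ≤ f ((1 - b) • y + b • x) :=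
      hmin (hf.1 hy hx (sub_nonneg.2 hb1.le) hb0.le (sub_add_cancel 1 b))
    simp only [smul_eq_mul] at hcomb
    have : (1 - b) * (b * c) ≤ (1 - b) * (f y - f x) := by linear_combination hle + hcomb
    exact le_of_mul_le_mul_left this (sub_pos.2 hb1)
  have hclosed : IsClosed {b : ℝ | b * c ≤ f y - f x} :=
    isClosed_le (continuous_id.mul continuous_const) continuous_const
  have hone : (1 : ℝ) ∈ closure (Ioo 0 1) := by
    rw [closure_Ioo zero_ne_one]
    exact right_mem_Icc.2 zero_le_one
  have := hclosed.closure_subset_iff.2 hseg hone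
  rw [mem_ofPred, one_mul] at this
  linarith

end StrongConvexity

lemma ConvexOn.apply_sub_le_of_hasFDerivAt {E : Type*} [NormedAddCommGroup E] [NormedSpace ℝ E]
    {s : Set E} {f : E → ℝ} {f' : E →L[ℝ] ℝ} {x y : E} (hf : ConvexOn ℝ s f)
    (hx : x ∈ s) (hy : y ∈ s) (hf' : HasFDerivAt f f' x) :
    f' (y - x) ≤ f y - f x := by
  set L : ℝ →ᵃ[ℝ] E := AffineMap.lineMap x y
  have hline : ConvexOn ℝ (L ⁻¹' s) (f ∘ L) := hf.comp_affineMap L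
  have hderiv : HasDerivAt (f ∘ L) (f' (y - x)) 0 := by
    refine HasFDerivAt.comp_hasDerivAt (0 : ℝ) ?_ AffineMap.hasDerivAt_lineMap
    simpa [L] using hf'
  simpa [slope, L] using
    hline.le_slope_of_hasDerivAt (by simpa [L] using hx) (by simpa [L] using hy) zero_lt_one hderiv

theorem stmt_6_general (n : ℕ) (f g : EuclideanSpace ℝ (Fin n) → ℝ) (μf : ℝ) (hμf : 0 < μf)
    (hg : ConvexOn ℝ Set.univ g)
    (hf : StrongConvexOn Set.univ μf f) (hfd : Differentiable ℝ f)
    (lamk lamk1 : ℝ) (hlam : 0 < lamk) (hlam1 : lamk < lamk1)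
    (xk xk1 : EuclideanSpace ℝ (Fin n))
    (hxk : ∀ y, g xk + lamk * f xk ≤ g y + lamk * f y)
    (hxk1 : ∀ y, g xk1 + lamk1 * f xk1 ≤ g y + lamk1 * f y) :
    ‖xk - xk1‖ ≤ (2 / μf) * (1 - lamk / lamk1) * ‖gradient f xk‖ := by
  have hlam1' : 0 < lamk1 := hlam.trans hlam1
  have hgrowth := (hg.add_strongConvexOn (hf.smul hlam.le)).add_sq_norm_sub_le_of_isMinOn
    (isMinOn_univ_iff.2 hxk) (mem_univ xk) (mem_univ xk1)
  have hgrowth1 := (hg.add_strongConvexOn (hf.smul hlam1'.le)).add_sq_norm_sub_le_of_isMinOn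
    (isMinOn_univ_iff.2 hxk1) (mem_univ xk1) (mem_univ xk)
  have hfirst := (hf.convexOn fun r ↦ by positivity).apply_sub_le_of_hasFDerivAt
    (mem_univ xk) (mem_univ xk1) (hfd xk).hasGradientAt.hasFDerivAt
  rw [toDual_apply_apply] at hfirst
  have hcs := neg_le_of_abs_le (abs_real_inner_le_norm (gradient f xk) (xk1 - xk))
  simp only [Pi.add_apply, Pi.smul_apply, smul_eq_mul, norm_sub_rev xk1 xk] at hgrowth hgrowth1 hcs
  set D := ‖xk - xk1‖
  set G := ‖gradient f xk‖
  have hsum : (lamk + lamk1) * μf / 2 * D ^ 2 ≤ (lamk1 - lamk) * (f xk - f xk1) := by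
    linear_combination hgrowth + hgrowth1
  have hdiff : f xk - f xk1 ≤ G * D := by linarith
  have hlin : lamk1 * μf / 2 * D ≤ (lamk1 - lamk) * G := by
    rcases (show 0 ≤ D from norm_nonneg _).eq_or_lt with hD | hD
    · rw [← hD, mul_zero]
      exact mul_nonneg (sub_nonneg.2 hlam1.le) (norm_nonneg _)
    · refine le_of_mul_le_mul_right ?_ hD
      nlinarith [mul_nonneg (mul_pos hlam hμf).le (sq_nonneg D),
        mul_le_mul_of_nonneg_left hdiff (sub_nonneg.2 hlam1.le)]
  rw [show 2 / μf * (1 - lamk / lamk1) * G = (lamk1 - lamk) * G / (lamk1 * μf / 2) by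
    field_simp, le_div_iff₀ (by positivity)]
  linarith

theorem stmt_6 (n : ℕ) (f g : EuclideanSpace ℝ (Fin n) → ℝ) (μf : ℝ) (hμf : 0 < μf)
    (hg : ConvexOn ℝ Set.univ g) (hgd : Differentiable ℝ g)
    (hf : StrongConvexOn Set.univ μf f) (hfd : Differentiable ℝ f)
    (lamk lamk1 : ℝ) (hlam : 0 < lamk) (hlam1 : lamk < lamk1)
    (xk xk1 : EuclideanSpace ℝ (Fin n))
    (hxk : ∀ y, g xk + lamk * f xk ≤ g y + lamk * f y)
    (hxk1 : ∀ y, g xk1 + lamk1 * f xk1 ≤ g y + lamk1 * f y) :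
    ‖xk - xk1‖ ≤ (2 / μf) * (1 - lamk / lamk1) * ‖gradient f xk‖ :=
  stmt_6_general n f g μf hμf hg hf hfd lamk lamk1 hlam hlam1 xk xk1 hxk hxk1
end

section
/- Suppose a nonnegative sequence d_k satisfies d_{k+1} ≤ (1 - c k^{-(a+b)}) d_k + Θ/(k+1) for all k ≥ K, where c, Θ > 0 and 0 < a + b < 1 (with c k^{-(a+b)} < 1 for k ≥ K), and suppose in addition that the step ratio inequality (k^{a+b}/k) ≤ ((k+1)^{a+b}/(k+1))(1 + (c/2)) holds for k ≥ K. Then there exists B > 0 such that d_k ≤ B/k^{1-a-b} for all k ≥ K. -/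
theorem stmt_13 (a b c Θ : ℝ) (hc : 0 < c) (hΘ : 0 < Θ)
    (hab0 : 0 < a + b) (hab1 : a + b < 1)
    (d : ℕ → ℝ) (hd_nonneg : ∀ k, 0 ≤ d k)
    (K : ℕ) (hK : 1 ≤ K)
    (h_contr : ∀ k : ℕ, K ≤ k → c * (k : ℝ) ^ (-(a + b)) < 1)
    (h_rec : ∀ k : ℕ, K ≤ k →
      d (k + 1) ≤ (1 - c * (k : ℝ) ^ (-(a + b))) * d k + Θ / ((k : ℝ) + 1))
    (h_ratio : ∀ k : ℕ, K ≤ k →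
      (k : ℝ) ^ (a + b) / (k : ℝ) ≤
        (((k : ℝ) + 1) ^ (a + b) / ((k : ℝ) + 1)) * (1 + c / 2)) :
    ∃ B : ℝ, 0 < B ∧ ∀ k : ℕ, K ≤ k → d k ≤ B / (k : ℝ) ^ (1 - a - b) := by
  set p : ℝ := 1 - a - b with hpdef
  have hp0 : 0 < p := by simp [hpdef]; linarith
  have hp1 : p ≤ 1 := by simp [hpdef]; linarith
  -- choose M large
  obtain ⟨N, hN⟩ := exists_nat_ge ((2 * p / c) ^ p⁻¹)
  set M : ℕ := max K (max N 1) with hMdef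
  have hKM : K ≤ M := le_max_left _ _
  have hM : ∀ m : ℕ, M ≤ m → p * (m : ℝ) ^ (-p) ≤ c / 2 := by
    intro m hm
    have hm1 : 1 ≤ m := le_trans (le_trans (le_max_right N 1) (le_max_right K _)) hm
    have hmpos : (0 : ℝ) < m := by exact_mod_cast hm1
    have hbase : (0 : ℝ) ≤ 2 * p / c := by positivity
    have hNm : ((2 * p / c) ^ p⁻¹) ≤ (m : ℝ) :=
      le_trans hN (by exact_mod_cast le_trans (le_trans (le_max_left N 1) (le_max_right K _)) hm)
    have h1 : 2 * p / c ≤ (m : ℝ) ^ p := by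
      calc 2 * p / c = ((2 * p / c) ^ p⁻¹) ^ p := (Real.rpow_inv_rpow hbase hp0.ne').symm
        _ ≤ (m : ℝ) ^ p := Real.rpow_le_rpow (by positivity) hNm hp0.le
    have h2 : (m : ℝ) ^ (-p) ≤ c / (2 * p) := by
      rw [Real.rpow_neg hmpos.le]
      have h3 : (0 : ℝ) < 2 * p / c := by positivity
      calc ((m : ℝ) ^ p)⁻¹ ≤ (2 * p / c)⁻¹ := by
            exact inv_anti₀ h3 h1
        _ = c / (2 * p) := by field_simp
    calc p * (m : ℝ) ^ (-p) ≤ p * (c / (2 * p)) := by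
          exact mul_le_mul_of_nonneg_left h2 hp0.le
      _ = c / 2 := by field_simp
  -- define B
  have hne : (Finset.Icc K M).Nonempty := ⟨K, Finset.mem_Icc.mpr ⟨le_refl _, hKM⟩⟩
  set B : ℝ := max (4 * Θ / c) ((Finset.Icc K M).sup' hne (fun m => d m * (m : ℝ) ^ p)) with hBdef
  have hB : 0 < B := lt_of_lt_of_le (by positivity) (le_max_left _ _)
  have conv : ∀ m : ℕ, 1 ≤ m → d m * (m : ℝ) ^ p ≤ B → d m ≤ B * (m : ℝ) ^ (-p) := by
    intro m hm h
    have hmpos : (0 : ℝ) < m := by exact_mod_cast hm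
    have h1 : (0 : ℝ) < (m : ℝ) ^ p := Real.rpow_pos_of_pos hmpos p
    rw [Real.rpow_neg hmpos.le, ← div_eq_mul_inv, le_div_iff₀ h1]
    exact h
  have hsmall : ∀ m : ℕ, K ≤ m → m ≤ M → d m ≤ B * (m : ℝ) ^ (-p) := by
    intro m hm1 hm2
    refine conv m (le_trans hK hm1) ?_
    exact le_trans (Finset.le_sup' (fun m => d m * (m : ℝ) ^ p)
      (Finset.mem_Icc.mpr ⟨hm1, hm2⟩)) (le_max_right _ _)
  have claim : ∀ k : ℕ, K ≤ k → d k ≤ B * (k : ℝ) ^ (-p) := by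
    intro k hk
    induction k, hk using Nat.le_induction with
    | base => exact hsmall K le_rfl hKM
    | succ k hk ih =>
      rcases le_or_gt (k + 1) M with hkM | hkM
      · exact hsmall (k + 1) (le_trans hk (Nat.le_succ k)) hkM
      · have hMk : M ≤ k := Nat.lt_succ_iff.mp hkM
        have hk1 : 1 ≤ k := le_trans hK hk
        have kpos : (0 : ℝ) < (k : ℝ) := by exact_mod_cast hk1
        have k1pos : (0 : ℝ) < (k : ℝ) + 1 := by positivity
        set x : ℝ := (k : ℝ) ^ (-(a + b)) with hx
        set u : ℝ := (k : ℝ) ^ (-p) with hu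
        set v : ℝ := ((k : ℝ) + 1) ^ (-p) with hv
        set w : ℝ := ((k : ℝ))⁻¹ with hw
        have upos : 0 < u := Real.rpow_pos_of_pos kpos _
        have vpos : 0 < v := Real.rpow_pos_of_pos k1pos _
        have wpos : 0 < w := by positivity
        have f3 : 0 ≤ 1 - c * x := by linarith [h_contr k hk]
        have f2 : d k ≤ B * u := ih
        have f1 : d (k + 1) ≤ (1 - c * x) * d k + Θ / ((k : ℝ) + 1) := h_rec k hk
        have f4 : x * u = w := by
          rw [hx, hu, hw, ← Real.rpow_add kpos,
            show -(a + b) + -p = (-1 : ℝ) by rw [hpdef]; ring, Real.rpow_neg_one]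
        have f7 : Θ / ((k : ℝ) + 1) ≤ Θ * w := by
          rw [hw, mul_comm, inv_mul_eq_div]
          exact div_le_div_of_nonneg_left hΘ.le kpos (by linarith)
        have f6 : p * v ≤ c / 2 := by
          have := hM (k + 1) (le_trans hMk (Nat.le_succ k))
          rw [hv]
          push_cast at this ⊢
          exact this
        have f8 : 4 * Θ ≤ c * B := by
          have : 4 * Θ / c ≤ B := le_max_left _ _
          rw [div_le_iff₀ hc] at this
          linarith
        -- Bernoulli: u ≤ v * (1 + p * w)
        have hA : ((k : ℝ) + 1) ^ p ≤ (k : ℝ) ^ p * (1 + p * w) := by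
          have hrw : (k : ℝ) + 1 = (k : ℝ) * (1 + w) := by
            rw [hw]; field_simp
          rw [hrw, Real.mul_rpow kpos.le (by positivity)]
          exact mul_le_mul_of_nonneg_left
            (rpow_one_add_le_one_add_mul_self (by linarith) hp0.le hp1)
            (Real.rpow_nonneg kpos.le p)
        have f5 : u ≤ v * (1 + p * w) := by
          have hkp : (0 : ℝ) < (k : ℝ) ^ p := Real.rpow_pos_of_pos kpos p
          have hk1p : (0 : ℝ) < ((k : ℝ) + 1) ^ p := Real.rpow_pos_of_pos k1pos p
          rw [hu, hv, Real.rpow_neg kpos.le, Real.rpow_neg k1pos.le,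
            inv_mul_eq_div, inv_eq_one_div, div_le_div_iff₀ hkp hk1p]
          nlinarith
        have key : d (k + 1) ≤ B * v := by
          calc d (k + 1) ≤ (1 - c * x) * d k + Θ / ((k : ℝ) + 1) := f1
            _ ≤ (1 - c * x) * (B * u) + Θ * w :=
                add_le_add (mul_le_mul_of_nonneg_left f2 f3) f7
            _ = B * u - c * B * (x * u) + Θ * w := by ring
            _ = B * u - c * B * w + Θ * w := by rw [f4]
            _ ≤ B * (v * (1 + p * w)) - c * B * w + Θ * w := by
                linarith [mul_le_mul_of_nonneg_left f5 hB.le]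
            _ = B * v + (p * v) * (B * w) - c * B * w + Θ * w := by ring
            _ ≤ B * v + (c / 2) * (B * w) - c * B * w + Θ * w := by
                linarith [mul_le_mul_of_nonneg_right f6 (mul_nonneg hB.le wpos.le)]
            _ = B * v - ((c / 2) * B - Θ) * w := by ring
            _ ≤ B * v := by
                have h9 : 0 ≤ ((c / 2) * B - Θ) * w :=
                  mul_nonneg (by linarith) wpos.le
                linarith
        have : ((k : ℝ) + 1) = ((k + 1 : ℕ) : ℝ) := by push_cast; ring
        rw [← this]
        exact key
  refine ⟨B, hB, fun k hk => ?_⟩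
  have hkpos : (0 : ℝ) < (k : ℝ) := by exact_mod_cast le_trans hK hk
  have := claim k hk
  rwa [Real.rpow_neg hkpos.le, ← div_eq_mul_inv] at this
end
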